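/- Let ρ = ∑_{i∈I} p_i |e_i⟩⟨e_i| ⊗ ϱ_i be a density matrix on ℂ^d ⊗ (ℂ^{D_1} ⊗ ⋯ ⊗ ℂ^{D_N}), where {e_i} is an orthonormal family in ℂ^d, p_i are probabilities, ϱ_i are density matrices on the environment space, and assume that for every k the single-party reductions satisfy ϱ_i^k ϱ_j^k = 0 for i ≠ j. Let Π_i^k be the support projector of ϱ_i^k. Then for every nonempty subset K ⊆ {1,…,N} and all indices i ∈ I and (i_k)_{k∈K} ∈ I^K, the outcome probability p(i, (i_k)) = tr[ρ · (|e_i⟩⟨e_i| ⊗ ⊗_{k∈K} Π_{i_k}^k ⊗ 1)] vanishes unless i_k = i for all k ∈ K; likewise, without the system measurement, tr[ρ · (1 ⊗ ⊗_{k∈K} Π_{i_k}^k ⊗ 1)] vanishes unless all i_k are equal. -/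

import Mathlib

/-!
Expanding `ρ`, each outcome probability is `∑ j, p j * tr(|e j⟩⟨e j| X) * tr(ϱ j * T)` with
`T = ⊗ₖ M k` a tensor product of orthogonal projections. If some `k ∈ K` has `f k ≠ j`, then
`ϱ_j^k ϱ_{f k}^k = 0` forces `ϱ_j^k Π = 0` for the support projector `Π` of `ϱ_{f k}^k`, because
`Π = ϱ_{f k}^k X` for some `X`. With `A` the projector `Π` placed at site `k` alone,
`tr(ϱ j * A) = tr(ϱ_j^k Π) = 0`, so the positive matrix `A ϱ_j A` vanishes; as `T = A B A`
with `B` collecting the other factors, `tr(ϱ j * T) = tr(A ϱ_j A B) = 0`. This kills every term of the second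
probability, and in the first all terms but `j = i` vanish by `⟨e j|e i⟩ = 0`.
-/

open scoped Kronecker Matrix ComplexOrder BigOperators
open Matrix

noncomputable section

/-- The rank-one operator `|v⟩⟨w| = v wᴴ`. -/
def ketBra {n : Type*} (v w : n → ℂ) : Matrix n n ℂ := Matrix.vecMulVec v (star w)

/-- A density matrix: positive semidefinite with unit trace. -/
def IsDensityMatrix {n : Type*} [Fintype n] (ρ : Matrix n n ℂ) : Prop :=
  ρ.PosSemidef ∧ ρ.trace = 1

/-- An orthonormal family of vectors. -/
def OrthonormalFamily {n I : Type*} [Fintype n] [DecidableEq I] (e : I → n → ℂ) : Prop :=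
  ∀ i j, star (e i) ⬝ᵥ e j = (if i = j then 1 else 0)

/-- The `N`-fold Kronecker (tensor) product of a family of matrices. -/
def tensorFamily {N : ℕ} {D : Fin N → ℕ} (M : ∀ k, Matrix (Fin (D k)) (Fin (D k)) ℂ) :
    Matrix (∀ k, Fin (D k)) (∀ k, Fin (D k)) ℂ :=
  fun a a' => ∏ k, M k (a k) (a' k)

/-- The Kronecker (tensor) product of the matrices `M k` over the factors `k ∈ K`. -/
def tensorOn {N : ℕ} {D : Fin N → ℕ} (K : Finset (Fin N))
    (M : ∀ k, Matrix (Fin (D k)) (Fin (D k)) ℂ) :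
    Matrix (∀ k : K, Fin (D k.1)) (∀ k : K, Fin (D k.1)) ℂ :=
  fun a a' => ∏ k : K, M k.1 (a k) (a' k)

/-- The partial trace of a matrix on an `N`-fold tensor product over all
tensor factors *not* in `K` (entrywise: sum over equal indices in the traced factors). -/
def reduceTo {N : ℕ} {D : Fin N → ℕ} (K : Finset (Fin N))
    (M : Matrix (∀ k, Fin (D k)) (∀ k, Fin (D k)) ℂ) :
    Matrix (∀ k : K, Fin (D k.1)) (∀ k : K, Fin (D k.1)) ℂ :=
  fun a a' => ∑ b : ∀ k : {k : Fin N // k ∉ K}, Fin (D k.1),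
    M (fun k => if h : k ∈ K then a ⟨k, h⟩ else b ⟨k, h⟩)
      (fun k => if h : k ∈ K then a' ⟨k, h⟩ else b ⟨k, h⟩)

/-- The single-party reduction: the partial trace over all tensor factors except the `k`-th. -/
def reduceSingle {N : ℕ} {D : Fin N → ℕ} (k : Fin N)
    (M : Matrix (∀ l, Fin (D l)) (∀ l, Fin (D l)) ℂ) :
    Matrix (Fin (D k)) (Fin (D k)) ℂ :=
  fun a a' => ∑ b : ∀ l : {l : Fin N // l ≠ k}, Fin (D l.1),
    M (fun l => if h : l = k then cast (congrArg (fun i => Fin (D i)) h.symm) a else b ⟨l, h⟩)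
      (fun l => if h : l = k then cast (congrArg (fun i => Fin (D i)) h.symm) a' else b ⟨l, h⟩)

/-- The support projector of a Hermitian matrix: the orthogonal projection onto its range. -/
def suppProj {n : Type*} [Fintype n] [DecidableEq n] (A : Matrix n n ℂ) : Matrix n n ℂ :=
  if hA : A.IsHermitian then
    (hA.eigenvectorUnitary : Matrix n n ℂ) *
      Matrix.diagonal (fun i => if hA.eigenvalues i = 0 then (0 : ℂ) else 1) *
      (hA.eigenvectorUnitary : Matrix n n ℂ)ᴴ
  else 0

namespace Matrix

variable {n : Type*} [Fintype n] [DecidableEq n] {A : Matrix n n ℂ}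

lemma IsHermitian.suppProj_eq (hA : A.IsHermitian) :
    suppProj A = Unitary.conjStarAlgAut ℂ _ hA.eigenvectorUnitary
      (diagonal fun i => if hA.eigenvalues i = 0 then 0 else 1) := by
  rw [suppProj, dif_pos hA]
  rfl

lemma IsHermitian.isStarProjection_suppProj (hA : A.IsHermitian) :
    IsStarProjection (suppProj A) := by
  rw [hA.suppProj_eq]
  refine IsStarProjection.map ⟨?_, ?_⟩ _
  · rw [IsIdempotentElem, diagonal_mul_diagonal]
    congr 1
    ext i
    split_ifs <;> simp
  · rw [IsSelfAdjoint, star_eq_conjTranspose, diagonal_conjTranspose]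
    congr 1
    ext i
    split_ifs <;> simp_all

-- The indicator of `λ ≠ 0` is `λ * λ⁻¹`, using `(0 : ℂ)⁻¹ = 0`.
lemma IsHermitian.exists_suppProj_eq_mul (hA : A.IsHermitian) :
    ∃ X : Matrix n n ℂ, suppProj A = A * X := by
  refine ⟨Unitary.conjStarAlgAut ℂ _ hA.eigenvectorUnitary
    (diagonal fun i => ((hA.eigenvalues i : ℂ))⁻¹), ?_⟩
  calc suppProj A
      = Unitary.conjStarAlgAut ℂ _ hA.eigenvectorUnitary
          (diagonal (RCLike.ofReal ∘ hA.eigenvalues) *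
            diagonal fun i => ((hA.eigenvalues i : ℂ))⁻¹) := by
        rw [hA.suppProj_eq, diagonal_mul_diagonal]
        congr 2
        ext i
        split_ifs with h <;> simp [h]
    _ = _ := by rw [map_mul, ← hA.spectral_theorem]

lemma IsHermitian.mul_suppProj_eq_zero {B : Matrix n n ℂ} (hA : A.IsHermitian)
    (h : B * A = 0) : B * suppProj A = 0 := by
  obtain ⟨X, hX⟩ := hA.exists_suppProj_eq_mul
  rw [hX, ← Matrix.mul_assoc, h, Matrix.zero_mul]

end Matrix

section TensorFamily

variable {N : ℕ} {D : Fin N → ℕ}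

lemma tensorFamily_mul (M M' : ∀ k, Matrix (Fin (D k)) (Fin (D k)) ℂ) :
    tensorFamily M * tensorFamily M' = tensorFamily (M * M') := by
  ext a b
  simp only [Matrix.mul_apply, tensorFamily, Pi.mul_apply]
  rw [Finset.prod_univ_sum, Fintype.piFinset_univ]
  exact Finset.sum_congr rfl fun c _ => Finset.prod_mul_distrib.symm

lemma star_tensorFamily (M : ∀ k, Matrix (Fin (D k)) (Fin (D k)) ℂ) :
    star (tensorFamily M) = tensorFamily (star M) := by
  ext a b
  simp [Matrix.star_apply, tensorFamily, star_prod]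

lemma isStarProjection_tensorFamily {M : ∀ k, Matrix (Fin (D k)) (Fin (D k)) ℂ}
    (hM : ∀ k, IsStarProjection (M k)) : IsStarProjection (tensorFamily M) where
  isIdempotentElem := by
    rw [IsIdempotentElem, tensorFamily_mul]
    exact congrArg tensorFamily (funext fun k => (hM k).isIdempotentElem.eq)
  isSelfAdjoint := by
    rw [IsSelfAdjoint, star_tensorFamily]
    exact congrArg tensorFamily (funext fun k => (hM k).isSelfAdjoint.star_eq)

lemma piSplitAt_symm_eq (k : Fin N) (c : Fin (D k))
    (b : ∀ l : {l : Fin N // l ≠ k}, Fin (D l.1)) :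
    (Equiv.piSplitAt k (fun l => Fin (D l))).symm (c, b) =
      fun l => if h : l = k then cast (congrArg (fun i => Fin (D i)) h.symm) c else b ⟨l, h⟩ := by
  funext l
  by_cases h : l = k
  · subst h; simp
  · simp [h]

lemma reduceSingle_apply (k : Fin N) (σ : Matrix (∀ l, Fin (D l)) (∀ l, Fin (D l)) ℂ)
    (c c' : Fin (D k)) :
    reduceSingle k σ c c' = ∑ b, σ ((Equiv.piSplitAt k _).symm (c, b))
      ((Equiv.piSplitAt k _).symm (c', b)) := by
  simp only [reduceSingle, piSplitAt_symm_eq]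

lemma tensorFamily_update_one_apply (k : Fin N) (P : Matrix (Fin (D k)) (Fin (D k)) ℂ)
    (a a' : ∀ l, Fin (D l)) :
    tensorFamily (Function.update 1 k P) a a' =
      (P ⊗ₖ (1 : Matrix (∀ l : {l : Fin N // l ≠ k}, Fin (D l.1)) _ ℂ))
        (Equiv.piSplitAt k _ a) (Equiv.piSplitAt k _ a') := by
  rw [tensorFamily, Fintype.prod_eq_mul_prod_subtype_ne _ k, Function.update_self,
    kroneckerMap_apply, Matrix.one_apply]
  congr 1
  simp only [Equiv.piSplitAt_apply, funext_iff, ← Fintype.prod_boole]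
  refine Finset.prod_congr rfl fun l _ => ?_
  rw [Function.update_of_ne l.2, Pi.one_apply, Matrix.one_apply]

lemma trace_mul_tensorFamily_update_one (k : Fin N)
    (σ : Matrix (∀ l, Fin (D l)) (∀ l, Fin (D l)) ℂ) (P : Matrix (Fin (D k)) (Fin (D k)) ℂ) :
    (σ * tensorFamily (Function.update 1 k P)).trace = (reduceSingle k σ * P).trace := by
  let e := Equiv.piSplitAt k (fun l => Fin (D l))
  simp only [Matrix.trace, Matrix.diag, Matrix.mul_apply, reduceSingle_apply,
    tensorFamily_update_one_apply]
  conv_lhs => rw [← e.symm.sum_comp]; enter [2, x]; rw [← e.symm.sum_comp]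
  simp only [e, Equiv.apply_symm_apply, Fintype.sum_prod_type, kroneckerMap_apply,
    Matrix.one_apply, mul_ite, mul_one, mul_zero, Finset.sum_ite_eq', Finset.mem_univ, if_true,
    Finset.sum_mul]
  exact Finset.sum_congr rfl fun _ _ => Finset.sum_comm

lemma reduceSingle_isHermitian (k : Fin N) {σ : Matrix (∀ l, Fin (D l)) (∀ l, Fin (D l)) ℂ}
    (hσ : σ.IsHermitian) : (reduceSingle k σ).IsHermitian := by
  ext c c'
  simp only [Matrix.conjTranspose_apply, reduceSingle_apply, star_sum]
  exact Finset.sum_congr rfl fun b _ => hσ.apply _ _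

lemma trace_mul_tensorFamily_eq_zero {σ : Matrix (∀ l, Fin (D l)) (∀ l, Fin (D l)) ℂ}
    (hσ : σ.PosSemidef) {M : ∀ l, Matrix (Fin (D l)) (Fin (D l)) ℂ}
    (hM : ∀ l, IsStarProjection (M l)) (k : Fin N) (hk : reduceSingle k σ * M k = 0) :
    (σ * tensorFamily M).trace = 0 := by
  set A := tensorFamily (Function.update 1 k (M k))
  have hA : IsStarProjection A := isStarProjection_tensorFamily fun l => by
    rcases eq_or_ne l k with rfl | h
    · simp [hM l]
    · simp [h]
  have hsplit : tensorFamily M = A * tensorFamily (Function.update M k 1) * A := by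
    rw [tensorFamily_mul, tensorFamily_mul]
    congr 1
    funext l
    rcases eq_or_ne l k with rfl | h
    · simp [(hM l).isIdempotentElem.eq]
    · simp [h]
  have hAσA : A * σ * A = 0 := by
    have hpos : (A * σ * A).PosSemidef := by
      have h := hσ.conjTranspose_mul_mul_same A
      rwa [← Matrix.star_eq_conjTranspose, hA.isSelfAdjoint.star_eq] at h
    rw [← hpos.trace_eq_zero_iff, Matrix.trace_mul_cycle, hA.isIdempotentElem.eq,
      Matrix.trace_mul_comm, trace_mul_tensorFamily_update_one, hk, Matrix.trace_zero]
  rw [hsplit, ← Matrix.mul_assoc, Matrix.trace_mul_comm, ← Matrix.mul_assoc, ← Matrix.mul_assoc,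
    hAσA, Matrix.zero_mul, Matrix.trace_zero]

end TensorFamily

lemma ketBra_mul_ketBra_eq_zero {n : Type*} [Fintype n] (u : n → ℂ) {v w : n → ℂ} (x : n → ℂ)
    (h : star v ⬝ᵥ w = 0) : ketBra u v * ketBra w x = 0 := by
  rw [ketBra, ketBra, vecMulVec_mul_vecMulVec, h, zero_smul]
  exact Matrix.vecMulVec_zero _

lemma trace_sum_smul_kronecker_mul_kronecker {R ι m n : Type*} [CommSemiring R] [Fintype ι]
    [Fintype m] [Fintype n] (c : ι → R) (X : ι → Matrix m m R) (Y : ι → Matrix n n R)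
    (A : Matrix m m R) (B : Matrix n n R) :
    ((∑ i, c i • (X i ⊗ₖ Y i)) * (A ⊗ₖ B)).trace =
      ∑ i, c i * ((X i * A).trace * (Y i * B).trace) := by
  simp only [Finset.sum_mul, Matrix.trace_sum, Matrix.smul_mul, Matrix.trace_smul,
    ← Matrix.mul_kronecker_mul, Matrix.trace_kronecker, smul_eq_mul]

theorem stmt_5_general {d N : ℕ} {D : Fin N → ℕ} {I : Type*} [Fintype I] [DecidableEq I]
    (p : I → ℝ)
    (e : I → Fin d → ℂ) (he : OrthonormalFamily e)
    (ϱ : I → Matrix (∀ k, Fin (D k)) (∀ k, Fin (D k)) ℂ)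
    (hϱ : ∀ i, IsDensityMatrix (ϱ i))
    (horth : ∀ k : Fin N, ∀ i j, i ≠ j → reduceSingle k (ϱ i) * reduceSingle k (ϱ j) = 0)
    (ρ : Matrix (Fin d × ∀ k, Fin (D k)) (Fin d × ∀ k, Fin (D k)) ℂ)
    (hρ : ρ = ∑ i, (p i : ℂ) • (ketBra (e i) (e i) ⊗ₖ ϱ i))
    (K : Finset (Fin N)) (f : Fin N → I) :
    (∀ i : I, (∃ k ∈ K, f k ≠ i) →
      (ρ * (ketBra (e i) (e i) ⊗ₖ
        tensorFamily (fun k => if k ∈ K then suppProj (reduceSingle k (ϱ (f k))) else 1))).trace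
        = 0) ∧
    ((∃ k ∈ K, ∃ l ∈ K, f k ≠ f l) →
      (ρ * ((1 : Matrix (Fin d) (Fin d) ℂ) ⊗ₖ
        tensorFamily (fun k => if k ∈ K then suppProj (reduceSingle k (ϱ (f k))) else 1))).trace
        = 0) := by
  set M : ∀ k, Matrix (Fin (D k)) (Fin (D k)) ℂ :=
    fun k => if k ∈ K then suppProj (reduceSingle k (ϱ (f k))) else 1
  have hherm : ∀ i k, (reduceSingle k (ϱ i)).IsHermitian := fun i k =>
    reduceSingle_isHermitian k (hϱ i).1.1
  have hM : ∀ k, IsStarProjection (M k) := fun k => by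
    by_cases hk : k ∈ K
    · simpa [M, hk] using (hherm (f k) k).isStarProjection_suppProj
    · simp [M, hk]
  have hvanish : ∀ j, (∃ k ∈ K, f k ≠ j) → (ϱ j * tensorFamily M).trace = 0 := by
    rintro j ⟨k, hk, hfk⟩
    refine trace_mul_tensorFamily_eq_zero (hϱ j).1 hM k ?_
    simpa [M, hk] using (hherm (f k) k).mul_suppProj_eq_zero (horth k j (f k) (Ne.symm hfk))
  refine ⟨fun i hi => ?_, fun ⟨k, hk, l, hl, hkl⟩ => ?_⟩ <;>
    rw [hρ, trace_sum_smul_kronecker_mul_kronecker] <;>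
    refine Finset.sum_eq_zero fun j _ => ?_
  · rcases eq_or_ne j i with rfl | hji
    · rw [hvanish j hi, mul_zero, mul_zero]
    · rw [ketBra_mul_ketBra_eq_zero _ _ (by simpa [hji] using he j i), Matrix.trace_zero,
        zero_mul, mul_zero]
  · have hj : ∃ k ∈ K, f k ≠ j := by
      by_cases hkj : f k = j
      · exact ⟨l, hl, fun hlj => hkl (hkj.trans hlj.symm)⟩
      · exact ⟨k, hk, hkj⟩
    rw [hvanish j hj, mul_zero, mul_zero]

/-- Agreement property of SBS states: all observers measuring their subenvironments
obtain the same outcome, equal to the outcome of the direct measurement on the system. -/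
theorem stmt_5 {d N : ℕ} {D : Fin N → ℕ} {I : Type*} [Fintype I] [DecidableEq I]
    (p : I → ℝ) (hp0 : ∀ i, 0 ≤ p i) (hp1 : ∑ i, p i = 1)
    (e : I → Fin d → ℂ) (he : OrthonormalFamily e)
    (ϱ : I → Matrix (∀ k, Fin (D k)) (∀ k, Fin (D k)) ℂ)
    (hϱ : ∀ i, IsDensityMatrix (ϱ i))
    (horth : ∀ k : Fin N, ∀ i j, i ≠ j → reduceSingle k (ϱ i) * reduceSingle k (ϱ j) = 0)
    (ρ : Matrix (Fin d × ∀ k, Fin (D k)) (Fin d × ∀ k, Fin (D k)) ℂ)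
    (hρ : ρ = ∑ i, (p i : ℂ) • (ketBra (e i) (e i) ⊗ₖ ϱ i))
    (K : Finset (Fin N)) (hK : K.Nonempty) (f : Fin N → I) :
    (∀ i : I, (∃ k ∈ K, f k ≠ i) →
      (ρ * (ketBra (e i) (e i) ⊗ₖ
        tensorFamily (fun k => if k ∈ K then suppProj (reduceSingle k (ϱ (f k))) else 1))).trace
        = 0) ∧
    ((∃ k ∈ K, ∃ l ∈ K, f k ≠ f l) →
      (ρ * ((1 : Matrix (Fin d) (Fin d) ℂ) ⊗ₖ
        tensorFamily (fun k => if k ∈ K then suppProj (reduceSingle k (ϱ (f k))) else 1))).trace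
        = 0) :=
  stmt_5_general p e he ϱ hϱ horth ρ hρ K f
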